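/- Let φ be a 3-SAT formula with variables x_1, …, x_n and m clauses each containing exactly 3 literals. Consider the two-agent allocation instance with K = {1, 2}, items V = {v_i, v̄_i, u_i : 1 ≤ i ≤ n} ∪ {c_j : 1 ≤ j ≤ m}, V_1 = V_2 = V, A_1 = {(v_i, c_j) : literal x_i appears in clause j} ∪ {(v̄_i, c_j) : literal ¬x_i appears in clause j}, and A_2 = {(v_i, u_i), (v̄_i, u_i) : 1 ≤ i ≤ n}. Then the following are equivalent: (1) φ is satisfiable; (2) there exists an allocation π with δ_π(1) + δ_π(2) ≤ 2n; (3) there exists an allocation π with max(δ_π(1), δ_π(2)) ≤ n. -/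
import Mathlib


/-- Item `u` dominates item `v`: `u = v` or there is a directed path from `u` to `v`
along the arcs in `A`. -/
def Dominates {α : Type*} (A : Set (α × α)) (u v : α) : Prop :=
  Relation.ReflTransGen (fun a b => (a, b) ∈ A) u v

/-- The dissatisfaction of an agent with approved item set `Vi`, arc set `A`,
receiving the set of items `P`. -/
noncomputable def dissat {α : Type*} (Vi : Set α) (A : Set (α × α)) (P : Set α) : ℕ :=
  Set.ncard {v | v ∈ Vi ∧ ¬ ∃ u, u ∈ P ∧ u ∈ Vi ∧ Dominates A u v}

/-- The satisfaction of an agent with approved item set `Vi`, arc set `A`,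
receiving the set of items `P`. -/
noncomputable def satis {α : Type*} (Vi : Set α) (A : Set (α × α)) (P : Set α) : ℕ :=
  Set.ncard {v | v ∈ Vi ∧ ∃ u, u ∈ P ∧ u ∈ Vi ∧ Dominates A u v}

/-- An allocation assigns pairwise disjoint sets of items to the agents. -/
def IsAllocation {ι α : Type*} (π : ι → Set α) : Prop :=
  Pairwise fun i j => Disjoint (π i) (π j)

/-- The arc set is acyclic (directed acyclic graph). -/
def Acyclic {α : Type*} (A : Set (α × α)) : Prop :=
  ∀ v : α, ¬ Relation.TransGen (fun a b => (a, b) ∈ A) v v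

/-- Items of the reduction: variable items `v_i = (i, true)`, `v̄_i = (i, false)`,
dummy items `u_i`, and clause items `c_j`. -/
abbrev SatItm (n m : ℕ) : Type := (Fin n × Bool) ⊕ Fin n ⊕ Fin m

/-- Arcs of agent 1: from each literal item to the items of the clauses containing it.
Clause `j` is given by its three literals `cl j 0, cl j 1, cl j 2`, a literal being a pair
(variable index, sign). -/
def satA1 (n m : ℕ) (cl : Fin m → Fin 3 → Fin n × Bool) :
    Set (SatItm n m × SatItm n m) :=
  {p | ∃ (j : Fin m) (t : Fin 3), p = (.inl (cl j t), .inr (.inr j))}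

/-- Arcs of agent 2: `(v_i, u_i)` and `(v̄_i, u_i)` for each variable `i`. -/
def satA2 (n m : ℕ) : Set (SatItm n m × SatItm n m) :=
  {p | ∃ (i : Fin n) (b : Bool), p = (.inl (i, b), .inr (.inl i))}

section Aux
open Sum Set

variable {n m : ℕ} {cl : Fin m → Fin 3 → Fin n × Bool}

lemma rtg_eq_of_no_out {α : Type*} {A : Set (α × α)} {u v : α} (h : ∀ y, (u, y) ∉ A)
    (hr : Relation.ReflTransGen (fun a b => (a, b) ∈ A) u v) : u = v := by
  rcases hr.cases_head with rfl | ⟨w, hw, _⟩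
  · rfl
  · exact absurd hw (h w)

lemma no_out1 (x : Fin n ⊕ Fin m) (y : SatItm n m) : ((inr x, y)) ∉ satA1 n m cl := by
  rintro ⟨j, t, h⟩
  simp [Prod.ext_iff] at h

lemma no_out2 (x : Fin n ⊕ Fin m) (y : SatItm n m) : ((inr x, y)) ∉ satA2 n m := by
  rintro ⟨i, b, h⟩
  simp [Prod.ext_iff] at h

lemma dom1_iff {u v : SatItm n m} :
    Dominates (satA1 n m cl) u v ↔ u = v ∨ ∃ j t, u = inl (cl j t) ∧ v = inr (inr j) := by
  constructor
  · intro h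
    rcases h.cases_head with rfl | ⟨w, hw, hwv⟩
    · exact Or.inl rfl
    · obtain ⟨j, t, hp⟩ := hw
      rw [Prod.ext_iff] at hp
      obtain ⟨hu, hww⟩ := hp
      subst hww
      have h2 := rtg_eq_of_no_out (fun y => no_out1 (inr j) y) hwv
      exact Or.inr ⟨j, t, hu, h2.symm⟩
  · rintro (rfl | ⟨j, t, rfl, rfl⟩)
    · exact Relation.ReflTransGen.refl
    · exact Relation.ReflTransGen.single ⟨j, t, rfl⟩

lemma dom2_iff {u v : SatItm n m} :
    Dominates (satA2 n m) u v ↔ u = v ∨ ∃ i b, u = inl (i, b) ∧ v = inr (inl i) := by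
  constructor
  · intro h
    rcases h.cases_head with rfl | ⟨w, hw, hwv⟩
    · exact Or.inl rfl
    · obtain ⟨i, b, hp⟩ := hw
      rw [Prod.ext_iff] at hp
      obtain ⟨hu, hww⟩ := hp
      subst hww
      have h2 := rtg_eq_of_no_out (fun y => no_out2 (inl i) y) hwv
      exact Or.inr ⟨i, b, hu, h2.symm⟩
  · rintro (rfl | ⟨i, b, rfl, rfl⟩)
    · exact Relation.ReflTransGen.refl
    · exact Relation.ReflTransGen.single ⟨i, b, rfl⟩

lemma dissat_univ {α : Type*} (A : Set (α × α)) (P : Set α) :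
    dissat Set.univ A P = Set.ncard {v | ¬ ∃ u ∈ P, Dominates A u v} := by
  unfold dissat
  congr 1
  ext v
  simp

lemma ncard_range_n (f : Fin n → SatItm n m) (hf : Function.Injective f) :
    (Set.range f).ncard = n := by
  rw [← Set.image_univ, Set.ncard_image_of_injective _ hf, Set.ncard_univ]
  simp

end Aux

section Main
open Sum Set

variable {n m : ℕ} {cl : Fin m → Fin 3 → Fin n × Bool}

lemma forward_alloc (β : Fin n → Bool) (hβ : ∀ j : Fin m, ∃ t : Fin 3, β (cl j t).1 = (cl j t).2) :
    ∃ P1 P2 : Set (SatItm n m), Disjoint P1 P2 ∧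
      dissat Set.univ (satA1 n m cl) P1 ≤ n ∧ dissat Set.univ (satA2 n m) P2 ≤ n := by
  refine ⟨(Set.range fun i : Fin n => (inl (i, β i) : SatItm n m)) ∪
      Set.range (fun i : Fin n => (inr (inl i) : SatItm n m)),
    (Set.range fun i : Fin n => (inl (i, !β i) : SatItm n m)) ∪
      Set.range (fun j : Fin m => (inr (inr j) : SatItm n m)), ?_, ?_, ?_⟩
  · rw [Set.disjoint_left]
    rintro x (⟨i, rfl⟩ | ⟨i, rfl⟩) (⟨i', h⟩ | ⟨j', h⟩) <;>
      simp [Prod.ext_iff] at h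
    obtain ⟨rfl, h⟩ := h
    simp at h
  · rw [dissat_univ]
    have hsub : {v : SatItm n m | ¬ ∃ u ∈ (Set.range fun i : Fin n => (inl (i, β i) : SatItm n m)) ∪
        Set.range (fun i : Fin n => (inr (inl i) : SatItm n m)), Dominates (satA1 n m cl) u v} ⊆
        Set.range (fun i : Fin n => (inl (i, !β i) : SatItm n m)) := by
      rintro (⟨i, b⟩ | x | j) hv
      · by_cases hb : b = β i
        · exfalso; exact hv ⟨inl (i, b), Or.inl ⟨i, by rw [hb]⟩, Relation.ReflTransGen.refl⟩
        · exact ⟨i, by cases b <;> simp_all⟩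
      · exact absurd ⟨inr (inl x), Or.inr ⟨x, rfl⟩, Relation.ReflTransGen.refl⟩ hv
      · exfalso
        obtain ⟨t, ht⟩ := hβ j
        refine hv ⟨inl (cl j t), Or.inl ⟨(cl j t).1, ?_⟩, dom1_iff.mpr (Or.inr ⟨j, t, rfl, rfl⟩)⟩
        show inl ((cl j t).1, β (cl j t).1) = inl (cl j t)
        rw [ht]
    calc _ ≤ (Set.range (fun i : Fin n => (inl (i, !β i) : SatItm n m))).ncard :=
          Set.ncard_le_ncard hsub (Set.toFinite _)
      _ = n := ncard_range_n _ (fun a b h => by have := Sum.inl.inj h; exact (Prod.ext_iff.mp this).1)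
  · rw [dissat_univ]
    have hsub : {v : SatItm n m | ¬ ∃ u ∈ (Set.range fun i : Fin n => (inl (i, !β i) : SatItm n m)) ∪
        Set.range (fun j : Fin m => (inr (inr j) : SatItm n m)), Dominates (satA2 n m) u v} ⊆
        Set.range (fun i : Fin n => (inl (i, β i) : SatItm n m)) := by
      rintro (⟨i, b⟩ | x | j) hv
      · by_cases hb : b = !β i
        · exfalso; exact hv ⟨inl (i, b), Or.inl ⟨i, by rw [hb]⟩, Relation.ReflTransGen.refl⟩
        · exact ⟨i, by cases b <;> simp_all⟩
      · exact absurd ⟨inl (x, !β x), Or.inl ⟨x, rfl⟩,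
          dom2_iff.mpr (Or.inr ⟨x, !β x, rfl, rfl⟩)⟩ hv
      · exact absurd ⟨inr (inr j), Or.inr ⟨j, rfl⟩, Relation.ReflTransGen.refl⟩ hv
    calc _ ≤ (Set.range (fun i : Fin n => (inl (i, β i) : SatItm n m))).ncard :=
          Set.ncard_le_ncard hsub (Set.toFinite _)
      _ = n := ncard_range_n _ (fun a b h => by have := Sum.inl.inj h; exact (Prod.ext_iff.mp this).1)

end Main

section Bwd
open Sum Set

variable {n m : ℕ} {cl : Fin m → Fin 3 → Fin n × Bool}

lemma backward_alloc (P1 P2 : Set (SatItm n m)) (hd : Disjoint P1 P2)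
    (hsum : dissat Set.univ (satA1 n m cl) P1 + dissat Set.univ (satA2 n m) P2 ≤ 2*n) :
    ∃ β : Fin n → Bool, ∀ j : Fin m, ∃ t : Fin 3, β (cl j t).1 = (cl j t).2 := by
  classical
  set D1 : Set (SatItm n m) := {v | ¬ ∃ u ∈ P1, Dominates (satA1 n m cl) u v} with hD1
  set D2 : Set (SatItm n m) := {v | ¬ ∃ u ∈ P2, Dominates (satA2 n m) u v} with hD2
  rw [dissat_univ, dissat_univ] at hsum
  set L : Set (SatItm n m) := Set.range Sum.inl with hL
  have hLcard : L.ncard = 2 * n := by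
    rw [hL, ← Set.image_univ, Set.ncard_image_of_injective _ Sum.inl_injective, Set.ncard_univ]
    simp [Nat.card_eq_fintype_card, Fintype.card_prod]
    ring
  have h1 : L \ P1 ⊆ D1 := by
    rintro x ⟨⟨p, rfl⟩, hx⟩ ⟨u, hu, hdom⟩
    rcases dom1_iff.mp hdom with rfl | ⟨j, t, _, h⟩
    · exact hx hu
    · simp at h
  have h2 : L \ P2 ⊆ D2 := by
    rintro x ⟨⟨p, rfl⟩, hx⟩ ⟨u, hu, hdom⟩
    rcases dom2_iff.mp hdom with rfl | ⟨i, b, _, h⟩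
    · exact hx hu
    · simp at h
  have hcover : L = (L \ P1) ∪ (L \ P2) := by
    ext x
    simp only [Set.mem_union, Set.mem_diff]
    constructor
    · intro hx
      by_cases h : x ∈ P1
      · exact Or.inr ⟨hx, fun h2 => Set.disjoint_left.mp hd h h2⟩
      · exact Or.inl ⟨hx, h⟩
    · rintro (⟨hx, _⟩ | ⟨hx, _⟩) <;> exact hx
  have hge : 2 * n ≤ (L \ P1).ncard + (L \ P2).ncard := by
    have h := Set.ncard_union_le (L \ P1) (L \ P2)
    rw [← hcover, hLcard] at h
    exact h
  have hsum' : D1.ncard + D2.ncard ≤ 2 * n := hsum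
  have le1 : (L \ P1).ncard ≤ D1.ncard := Set.ncard_le_ncard h1 (Set.toFinite _)
  have le2 : (L \ P2).ncard ≤ D2.ncard := Set.ncard_le_ncard h2 (Set.toFinite _)
  have eq1 : (L \ P1).ncard = D1.ncard := by omega
  have eq2 : (L \ P2).ncard = D2.ncard := by omega
  have hD1eq : L \ P1 = D1 := Set.eq_of_subset_of_ncard_le h1 eq1.ge (Set.toFinite _)
  have hD2eq : L \ P2 = D2 := Set.eq_of_subset_of_ncard_le h2 eq2.ge (Set.toFinite _)
  -- every dummy item is in P1
  have hu1 : ∀ i : Fin n, (inr (inl i) : SatItm n m) ∈ P1 := by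
    intro i
    have hx : (inr (inl i) : SatItm n m) ∉ D1 := by
      rw [← hD1eq]; rintro ⟨⟨p, hp⟩, -⟩; simp at hp
    simp only [hD1, Set.mem_setOf_eq, not_not] at hx
    obtain ⟨u, hu, hdom⟩ := hx
    rcases dom1_iff.mp hdom with rfl | ⟨j, t, _, h⟩
    · exact hu
    · simp at h
  -- every clause item is in P2
  have hc2 : ∀ j : Fin m, (inr (inr j) : SatItm n m) ∈ P2 := by
    intro j
    have hx : (inr (inr j) : SatItm n m) ∉ D2 := by
      rw [← hD2eq]; rintro ⟨⟨p, hp⟩, -⟩; simp at hp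
    simp only [hD2, Set.mem_setOf_eq, not_not] at hx
    obtain ⟨u, hu, hdom⟩ := hx
    rcases dom2_iff.mp hdom with rfl | ⟨i, b, _, h⟩
    · exact hu
    · simp at h
  -- each clause has a literal in P1
  have hc1 : ∀ j : Fin m, ∃ t : Fin 3, (inl (cl j t) : SatItm n m) ∈ P1 := by
    intro j
    have hx : (inr (inr j) : SatItm n m) ∉ D1 := by
      rw [← hD1eq]; rintro ⟨⟨p, hp⟩, -⟩; simp at hp
    simp only [hD1, Set.mem_setOf_eq, not_not] at hx
    obtain ⟨u, hu, hdom⟩ := hx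
    rcases dom1_iff.mp hdom with rfl | ⟨j', t, rfl, h⟩
    · exact absurd (hc2 j) (Set.disjoint_left.mp hd hu)
    · simp only [Sum.inr.injEq] at h
      subst h
      exact ⟨t, hu⟩
  -- each variable has a literal in P2
  have hu2 : ∀ i : Fin n, ∃ b : Bool, (inl (i, b) : SatItm n m) ∈ P2 := by
    intro i
    have hx : (inr (inl i) : SatItm n m) ∉ D2 := by
      rw [← hD2eq]; rintro ⟨⟨p, hp⟩, -⟩; simp at hp
    simp only [hD2, Set.mem_setOf_eq, not_not] at hx
    obtain ⟨u, hu, hdom⟩ := hx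
    rcases dom2_iff.mp hdom with rfl | ⟨i', b, rfl, h⟩
    · exact absurd hu (Set.disjoint_left.mp hd (hu1 i))
    · simp only [Sum.inr.injEq, Sum.inl.injEq] at h
      subst h
      exact ⟨b, hu⟩
  refine ⟨fun i => if (inl (i, true) : SatItm n m) ∈ P1 then true else false, fun j => ?_⟩
  obtain ⟨t, ht⟩ := hc1 j
  refine ⟨t, ?_⟩
  rcases hp : cl j t with ⟨v, s⟩
  rw [hp] at ht
  simp only [hp]
  cases s with
  | true => rw [if_pos ht]
  | false =>
    rw [if_neg]
    intro h
    obtain ⟨b, hb⟩ := hu2 v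
    cases b with
    | true => exact Set.disjoint_left.mp hd h hb
    | false => exact Set.disjoint_left.mp hd ht hb

end Bwd

theorem stmt15 (n m : ℕ) (cl : Fin m → Fin 3 → Fin n × Bool) :
    ((∃ β : Fin n → Bool, ∀ j : Fin m, ∃ t : Fin 3, β (cl j t).1 = (cl j t).2) ↔
      (∃ P1 P2 : Set (SatItm n m), Disjoint P1 P2 ∧
        dissat Set.univ (satA1 n m cl) P1 + dissat Set.univ (satA2 n m) P2 ≤ 2*n)) ∧
    ((∃ P1 P2 : Set (SatItm n m), Disjoint P1 P2 ∧
        dissat Set.univ (satA1 n m cl) P1 + dissat Set.univ (satA2 n m) P2 ≤ 2*n) ↔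
      (∃ P1 P2 : Set (SatItm n m), Disjoint P1 P2 ∧
        max (dissat Set.univ (satA1 n m cl) P1) (dissat Set.univ (satA2 n m) P2) ≤ n)) := by
  constructor
  · constructor
    · rintro ⟨β, hβ⟩
      obtain ⟨P1, P2, hd, h1, h2⟩ := forward_alloc β hβ
      exact ⟨P1, P2, hd, by omega⟩
    · rintro ⟨P1, P2, hd, hsum⟩
      exact backward_alloc P1 P2 hd hsum
  · constructor
    · rintro ⟨P1, P2, hd, hsum⟩
      obtain ⟨β, hβ⟩ := backward_alloc P1 P2 hd hsum
      obtain ⟨Q1, Q2, hd', h1, h2⟩ := forward_alloc β hβ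
      exact ⟨Q1, Q2, hd', max_le h1 h2⟩
    · rintro ⟨P1, P2, hd, hmax⟩
      refine ⟨P1, P2, hd, ?_⟩
      have h1 := le_of_max_le_left hmax
      have h2 := le_of_max_le_right hmax
      omega
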